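/- Let T, S : H₁ → H₂ be bounded operators between Hilbert spaces, P : H₁ → H₁ an orthogonal projection, α > 0, B ∈ H₁, g = TB, and g̃ ∈ H₂. Let B_α = (T*T+αI)⁻¹T*g and B̂_α = (PS*SP + αI)⁻¹PS* g̃. Then ‖B_α − B̂_α‖ ≤ (‖T − S‖/√α)‖B‖ + (‖S − SP‖/√α)‖B‖ + ‖g − g̃‖/(2√α). -/

import Mathlib

open ContinuousLinearMap
open scoped RealInnerProductSpace

/-!
Write `Q = S ∘ P`; since `P` is symmetric, `Q* = P S*`, so `B̂α` solves `(Q*Q + α) B̂α = Q* g̃`.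
Using `α Bα = T*T (B - Bα)`, the error `e = Bα - B̂α` satisfies
`(Q*Q + α) e = Q* ((Q - T) Bα + (g - g̃)) + (T - Q)* T (B - Bα)`.
Pairing `(A*A + α) y = A* u + v` with `y` gives `‖y‖ ≤ ‖u‖ / (2√α) + ‖v‖ / α`; it remains to
bound `‖Bα‖ ≤ ‖B‖`, `‖T (B - Bα)‖ ≤ √α ‖B‖ / 2` and `‖T - Q‖ ≤ ‖T - S‖ + ‖S - S P‖`.
-/

namespace ContinuousLinearMap

variable {E F : Type*}
  [NormedAddCommGroup E] [InnerProductSpace ℝ E] [CompleteSpace E]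
  [NormedAddCommGroup F] [InnerProductSpace ℝ F] [CompleteSpace F]

theorem inner_adjoint_apply_add_smul_self (A : E →L[ℝ] F) (α : ℝ) (y : E) :
    ⟪adjoint A (A y) + α • y, y⟫ = ‖A y‖ ^ 2 + α * ‖y‖ ^ 2 := by
  rw [inner_add_left, real_inner_smul_left, adjoint_inner_left, real_inner_self_eq_norm_sq,
    real_inner_self_eq_norm_sq]

theorem norm_le_of_adjoint_apply_add_smul_eq (A : E →L[ℝ] F) {α : ℝ} (hα : 0 < α)
    {y v : E} {u : F} (h : adjoint A (A y) + α • y = adjoint A u + v) :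
    ‖y‖ ≤ ‖u‖ / (2 * √α) + ‖v‖ / α := by
  have henergy : ‖A y‖ ^ 2 + α * ‖y‖ ^ 2 ≤ ‖u‖ * ‖A y‖ + ‖v‖ * ‖y‖ := by
    rw [← inner_adjoint_apply_add_smul_self, h, inner_add_left, adjoint_inner_left]
    exact add_le_add (real_inner_le_norm _ _) (real_inner_le_norm _ _)
  set s := √α
  have hs : 0 < s := Real.sqrt_pos.mpr hα
  have hs2 : s ^ 2 = α := Real.sq_sqrt hα.le
  have hy2 : α * ‖y‖ ^ 2 ≤ ‖u‖ ^ 2 / 4 + ‖v‖ * ‖y‖ := by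
    nlinarith [sq_nonneg (‖A y‖ - ‖u‖ / 2)]
  have hX2 : (α * ‖y‖) ^ 2 ≤ (s * ‖u‖ / 2) ^ 2 + ‖v‖ * (α * ‖y‖) := by
    nlinarith [mul_le_mul_of_nonneg_left hy2 hα.le]
  -- `X ^ 2 ≤ p ^ 2 + q X` with `p, q ≥ 0` forces `X ≤ p + q`
  have hX : α * ‖y‖ ≤ s * ‖u‖ / 2 + ‖v‖ := by
    nlinarith [norm_nonneg v, mul_nonneg hs.le (norm_nonneg u)]
  calc ‖y‖ = α * ‖y‖ / α := by field_simp
    _ ≤ (s * ‖u‖ / 2 + ‖v‖) / α := by gcongr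
    _ = ‖u‖ / (2 * s) + ‖v‖ / α := by rw [← hs2]; field_simp

theorem four_mul_sq_norm_apply_le_of_adjoint_apply_add_smul_eq (A : E →L[ℝ] F) {α : ℝ}
    {y z : E} (h : adjoint A (A y) + α • y = z) : 4 * α * ‖A y‖ ^ 2 ≤ ‖z‖ ^ 2 := by
  have henergy : ‖adjoint A (A y)‖ ^ 2 + α * ‖A y‖ ^ 2 ≤ ‖z‖ * ‖adjoint A (A y)‖ := by
    calc ‖adjoint A (A y)‖ ^ 2 + α * ‖A y‖ ^ 2
        = ⟪adjoint A (A y) + α • y, adjoint A (A y)⟫ := by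
          rw [inner_add_left, real_inner_smul_left, real_inner_self_eq_norm_sq,
            real_inner_comm, adjoint_inner_left, real_inner_self_eq_norm_sq]
      _ ≤ ‖z‖ * ‖adjoint A (A y)‖ := h ▸ real_inner_le_norm _ _
  nlinarith [sq_nonneg (2 * ‖adjoint A (A y)‖ - ‖z‖)]

variable {A : E →L[ℝ] F} {α : ℝ} {x b : E}

theorem norm_le_of_adjoint_apply_add_smul_eq_adjoint_apply (hα : 0 < α)
    (h : adjoint A (A x) + α • x = adjoint A (A b)) : ‖x‖ ≤ ‖b‖ := by
  have hres : adjoint A (A (x - b)) + α • x = 0 := by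
    rw [map_sub, map_sub, ← h]; abel
  have hinner : ‖A (x - b)‖ ^ 2 + α * ⟪x, x - b⟫ = 0 := by
    have := congrArg (fun w => ⟪w, x - b⟫) hres
    simpa only [inner_add_left, real_inner_smul_left, adjoint_inner_left,
      real_inner_self_eq_norm_sq, inner_zero_left] using this
  have hxb : ‖x‖ ^ 2 ≤ ‖x‖ * ‖b‖ := by
    rw [inner_sub_right, real_inner_self_eq_norm_sq] at hinner
    nlinarith [real_inner_le_norm x b, sq_nonneg ‖A (x - b)‖]
  nlinarith [norm_nonneg x, norm_nonneg b]

theorem norm_apply_sub_le_of_adjoint_apply_add_smul_eq_adjoint_apply (hα : 0 < α)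
    (h : adjoint A (A x) + α • x = adjoint A (A b)) : ‖A (b - x)‖ ≤ √α / 2 * ‖b‖ := by
  have hres : adjoint A (A (b - x)) + α • (b - x) = α • b := by
    rw [map_sub, map_sub, ← h]; module
  have key := four_mul_sq_norm_apply_le_of_adjoint_apply_add_smul_eq A hres
  rw [norm_smul, Real.norm_of_nonneg hα.le] at key
  refine (pow_le_pow_iff_left₀ (norm_nonneg _) (by positivity) two_ne_zero).mp ?_
  rw [mul_pow, div_pow, Real.sq_sqrt hα.le]
  nlinarith

theorem adjoint_apply_add_smul_sub_eq {T Q : E →L[ℝ] F} {y : E} {h : F}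
    (hx : adjoint T (T x) + α • x = adjoint T (T b))
    (hy : adjoint Q (Q y) + α • y = adjoint Q h) :
    adjoint Q (Q (x - y)) + α • (x - y) =
      adjoint Q ((Q - T) x + (T b - h)) + adjoint (T - Q) (T (b - x)) := by
  simp only [map_sub, map_add, sub_apply]
  linear_combination (norm := module) hx - hy

end ContinuousLinearMap

theorem stmt13_general {H₁ H₂ : Type*}
    [NormedAddCommGroup H₁] [InnerProductSpace ℝ H₁] [CompleteSpace H₁]
    [NormedAddCommGroup H₂] [InnerProductSpace ℝ H₂] [CompleteSpace H₂]
    (T S : H₁ →L[ℝ] H₂) (P : H₁ →L[ℝ] H₁)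
    (hPsa : ∀ x y : H₁, ⟪P x, y⟫ = ⟪x, P y⟫)
    (α : ℝ) (hα : 0 < α)
    (B Bα Bhα : H₁) (g gt : H₂) (hg : g = T B)
    (hBα : (adjoint T) (T Bα) + α • Bα = (adjoint T) g)
    (hBhα : P ((adjoint S) (S (P Bhα))) + α • Bhα = P ((adjoint S) gt)) :
    ‖Bα - Bhα‖ ≤ ‖T - S‖ / Real.sqrt α * ‖B‖ + ‖S - S ∘L P‖ / Real.sqrt α * ‖B‖ +
      ‖g - gt‖ / (2 * Real.sqrt α) := by
  subst hg
  set Q := S ∘L P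
  have hQ : adjoint Q = P ∘L adjoint S := by
    have hP : adjoint P = P := isSelfAdjoint_iff_isSymmetric.mpr hPsa
    rw [adjoint_comp, hP]
  have hBhα' : adjoint Q (Q Bhα) + α • Bhα = adjoint Q gt := by rwa [hQ]
  have herr := adjoint_apply_add_smul_sub_eq hBα hBhα'
  have hTQ : ‖T - Q‖ ≤ ‖T - S‖ + ‖S - S ∘L P‖ := by
    simpa only [sub_add_sub_cancel] using norm_add_le (T - S) (S - Q)
  have hu : ‖(Q - T) Bα + (T B - gt)‖ ≤ ‖T - Q‖ * ‖B‖ + ‖T B - gt‖ := by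
    grw [norm_add_le, le_opNorm, norm_sub_rev Q T,
      norm_le_of_adjoint_apply_add_smul_eq_adjoint_apply hα hBα]
  have hv : ‖adjoint (T - Q) (T (B - Bα))‖ ≤ ‖T - Q‖ * (√α / 2 * ‖B‖) := by
    grw [le_opNorm, LinearIsometryEquiv.norm_map,
      norm_apply_sub_le_of_adjoint_apply_add_smul_eq_adjoint_apply hα hBα]
  calc ‖Bα - Bhα‖
      ≤ ‖(Q - T) Bα + (T B - gt)‖ / (2 * √α) + ‖adjoint (T - Q) (T (B - Bα))‖ / α :=
        norm_le_of_adjoint_apply_add_smul_eq Q hα herr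
    _ ≤ (‖T - Q‖ * ‖B‖ + ‖T B - gt‖) / (2 * √α) + ‖T - Q‖ * (√α / 2 * ‖B‖) / α := by
        gcongr
    _ = ‖T - Q‖ / √α * ‖B‖ + ‖T B - gt‖ / (2 * √α) := by
        field_simp
        rw [Real.sq_sqrt hα.le]
        ring
    _ ≤ _ := by grw [hTQ, add_div, add_mul]

/-- Galerkin/Tikhonov error estimate: with `P` an orthogonal projection,
`g = TB`, `Bα = (T*T+αI)⁻¹T*g` and `B̂α = (PS*SP+αI)⁻¹PS*g̃` (characterized by
their normal equations), one has
`‖Bα − B̂α‖ ≤ (‖T−S‖/√α)‖B‖ + (‖S−SP‖/√α)‖B‖ + ‖g−g̃‖/(2√α)`. -/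
theorem stmt13 {H₁ H₂ : Type*}
    [NormedAddCommGroup H₁] [InnerProductSpace ℝ H₁] [CompleteSpace H₁]
    [NormedAddCommGroup H₂] [InnerProductSpace ℝ H₂] [CompleteSpace H₂]
    (T S : H₁ →L[ℝ] H₂) (P : H₁ →L[ℝ] H₁)
    (hP2 : P ∘L P = P) (hPsa : ∀ x y : H₁, ⟪P x, y⟫ = ⟪x, P y⟫)
    (α : ℝ) (hα : 0 < α)
    (B Bα Bhα : H₁) (g gt : H₂) (hg : g = T B)
    (hBα : (adjoint T) (T Bα) + α • Bα = (adjoint T) g)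
    (hBhα : P ((adjoint S) (S (P Bhα))) + α • Bhα = P ((adjoint S) gt)) :
    ‖Bα - Bhα‖ ≤ ‖T - S‖ / Real.sqrt α * ‖B‖ + ‖S - S ∘L P‖ / Real.sqrt α * ‖B‖ +
      ‖g - gt‖ / (2 * Real.sqrt α) :=
  stmt13_general T S P hPsa α hα B Bα Bhα g gt hg hBα hBhα
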